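/- arXiv:2603.27614 — 2 statements merged into one kernel-verified Lean document; each statement's English description precedes it below -/
import Mathlib

section
/- In an involutive category with an inner product combinator satisfying [IP.1], the following are equivalent: (a) one of [IP.2](a) or [IP.2](b) holds together with [IP.2](c): ⟨f††|g††⟩ = ι_A^{-1} ⋅ ⟨f|g⟩ ⋅ ι_{B†}; (b) both [IP.2](a) and [IP.2](b) hold. -/
open CategoryTheory

universe v u

/-- An (achiral) involutive category: a contravariant endofunctor `(−)†`
together with a natural isomorphism `ι : X → X††` satisfying `ι_{X†} ≫ (ι_X)† = 1`. -/
structure Involutive (C : Type u) [Category.{v} C] where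
  dob : C → C
  dmap : ∀ {X Y : C}, (X ⟶ Y) → (dob Y ⟶ dob X)
  dmap_id : ∀ X : C, dmap (𝟙 X) = 𝟙 (dob X)
  dmap_comp : ∀ {X Y Z : C} (f : X ⟶ Y) (g : Y ⟶ Z), dmap (f ≫ g) = dmap g ≫ dmap f
  ι : ∀ X : C, X ⟶ dob (dob X)
  ιinv : ∀ X : C, dob (dob X) ⟶ X
  ι_hom_inv : ∀ X : C, ι X ≫ ιinv X = 𝟙 X
  ι_inv_hom : ∀ X : C, ιinv X ≫ ι X = 𝟙 (dob (dob X))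
  ι_natural : ∀ {X Y : C} (f : X ⟶ Y), f ≫ ι Y = ι X ≫ dmap (dmap f)
  ι_dagger : ∀ X : C, ι (dob X) ≫ dmap (ι X) = 𝟙 (dob X)

/-- A unitary structure on an involutive category: isomorphisms `φ_X : X → X†`
with `φ_{X†} = (φ_X⁻¹)†` and `φ_X ≫ φ_{X†} = ι_X`. -/
structure UnitaryStruct {C : Type u} [Category.{v} C] (D : Involutive C) where
  φ : ∀ X : C, X ⟶ D.dob X
  φinv : ∀ X : C, D.dob X ⟶ X
  φ_hom_inv : ∀ X : C, φ X ≫ φinv X = 𝟙 X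
  φ_inv_hom : ∀ X : C, φinv X ≫ φ X = 𝟙 (D.dob X)
  u1 : ∀ X : C, φ (D.dob X) = D.dmap (φinv X)
  u2 : ∀ X : C, φ X ≫ φ (D.dob X) = D.ι X

/-- An inner product combinator on an involutive category. -/
structure IPStruct {C : Type u} [Category.{v} C] (D : Involutive C) where
  ip : ∀ {A B X : C}, (A ⟶ X) → (B ⟶ X) → (A ⟶ D.dob B)

/-- The dual inner product `⟨h|k⟩^ι := ι_{A†} ≫ ⟨k†|h†⟩† ≫ ι_B⁻¹`. -/
def IPStruct.dual {C : Type u} [Category.{v} C] {D : Involutive C} (S : IPStruct D)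
    {X A B : C} (h : X ⟶ A) (k : X ⟶ B) : D.dob A ⟶ B :=
  D.ι (D.dob A) ≫ D.dmap (S.ip (D.dmap k) (D.dmap h)) ≫ D.ιinv B

/-- An inner product category: axioms [IP.1]–[IP.4]. -/
structure InnerProduct {C : Type u} [Category.{v} C] (D : Involutive C) extends IPStruct D where
  ip1 : ∀ {A B X Y Z : C} (f : A ⟶ X) (g : B ⟶ X) (h : Y ⟶ A) (k : Z ⟶ B),
    ip (h ≫ f) (k ≫ g) = h ≫ ip f g ≫ D.dmap k
  ip2a : ∀ {A B X : C} (f : A ⟶ X) (g : B ⟶ X),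
    D.ι A ≫ toIPStruct.dual (D.dmap f) (D.dmap g) = ip f g
  ip2b : ∀ {A B X : C} (f : A ⟶ X) (g : B ⟶ X),
    D.ι B ≫ D.dmap (ip f g) = ip g f
  ip3 : ∀ {A B X : C} (f : A ⟶ X) (g : B ⟶ X) (h k : X ⟶ B),
    h ≫ g = 𝟙 X → ip f g ≫ toIPStruct.dual h k = f ≫ k
  ip4 : ∀ {A X Z : C} (f : A ⟶ Z) (g : A ⟶ X) (h k : X ⟶ A),
    g ≫ h = 𝟙 A → toIPStruct.dual f g ≫ ip h k = D.dmap (k ≫ f)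

/-- The inner product induced by a unitary structure: `⟨f|g⟩ := f ≫ φ_X ≫ g†`. -/
def UnitaryStruct.uip {C : Type u} [Category.{v} C] {D : Involutive C} (U : UnitaryStruct D)
    {A B X : C} (f : A ⟶ X) (g : B ⟶ X) : A ⟶ D.dob B :=
  f ≫ U.φ X ≫ D.dmap g

/-- The dual inner product induced by a unitary structure. -/
def UnitaryStruct.udual {C : Type u} [Category.{v} C] {D : Involutive C} (U : UnitaryStruct D)
    {X A B : C} (h : X ⟶ A) (k : X ⟶ B) : D.dob A ⟶ B :=
  D.ι (D.dob A) ≫ D.dmap (U.uip (D.dmap k) (D.dmap h)) ≫ D.ιinv B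

/-- The inner adjoint `f* := φ_B ≫ f† ≫ φ_A⁻¹` of `f : A ⟶ B`. -/
def UnitaryStruct.adj {C : Type u} [Category.{v} C] {D : Involutive C} (U : UnitaryStruct D)
    {A B : C} (f : A ⟶ B) : B ⟶ A :=
  U.φ B ≫ D.dmap f ≫ U.φinv A

/-- [IP.2](a): `ι_A ≫ ⟨f†|g†⟩^ι = ⟨f|g⟩`. -/
def IP2a {C : Type u} [Category.{v} C] {D : Involutive C} (S : IPStruct D) : Prop :=
  ∀ {A B X : C} (f : A ⟶ X) (g : B ⟶ X),
    D.ι A ≫ S.dual (D.dmap f) (D.dmap g) = S.ip f g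

/-- [IP.2](b): `ι_B ≫ ⟨f|g⟩† = ⟨g|f⟩`. -/
def IP2b {C : Type u} [Category.{v} C] {D : Involutive C} (S : IPStruct D) : Prop :=
  ∀ {A B X : C} (f : A ⟶ X) (g : B ⟶ X),
    D.ι B ≫ D.dmap (S.ip f g) = S.ip g f

/-- [IP.2](c): `⟨f††|g††⟩ = ι_A⁻¹ ≫ ⟨f|g⟩ ≫ ι_{B†}`. -/
def IP2c {C : Type u} [Category.{v} C] {D : Involutive C} (S : IPStruct D) : Prop :=
  ∀ {A B X : C} (f : A ⟶ X) (g : B ⟶ X),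
    S.ip (D.dmap (D.dmap f)) (D.dmap (D.dmap g)) = D.ιinv A ≫ S.ip f g ≫ D.ι (D.dob B)

/-!
Everything hinges on rewriting the dual `⟨f†|g†⟩^ι`. Under [IP.2](c) it equals `⟨g|f⟩†`, so
[IP.2](a) and [IP.2](b) become literally the same equation `ι_A ≫ ⟨g|f⟩† = ⟨f|g⟩`. Under
[IP.2](b) it equals `⟨f††|g††⟩ ≫ ι⁻¹`, so [IP.2](a) becomes [IP.2](c) after cancelling the
isomorphisms `ι`.
-/

namespace Involutive

variable {C : Type u} [Category.{v} C] (D : Involutive C)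

lemma dmap_ι (X : C) : D.dmap (D.ι X) = D.ιinv (D.dob X) := by
  calc D.dmap (D.ι X) = (D.ιinv (D.dob X) ≫ D.ι (D.dob X)) ≫ D.dmap (D.ι X) := by
        rw [D.ι_inv_hom, Category.id_comp]
    _ = D.ιinv (D.dob X) := by rw [Category.assoc, D.ι_dagger, Category.comp_id]

lemma dmap_ιinv (X : C) : D.dmap (D.ιinv X) = D.ι (D.dob X) := by
  have h : D.dmap (D.ιinv X) ≫ D.ιinv (D.dob X) = 𝟙 _ := by
    rw [← D.dmap_ι, ← D.dmap_comp, D.ι_hom_inv, D.dmap_id]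
  calc D.dmap (D.ιinv X) = D.dmap (D.ιinv X) ≫ D.ιinv (D.dob X) ≫ D.ι (D.dob X) := by
        rw [D.ι_inv_hom, Category.comp_id]
    _ = D.ι (D.dob X) := by rw [← Category.assoc, h, Category.id_comp]

lemma ι_comp_comp_ιinv_eq_iff {A B : C} (x : D.dob (D.dob A) ⟶ D.dob (D.dob B))
    (y : A ⟶ B) : D.ι A ≫ x ≫ D.ιinv B = y ↔ x = D.ιinv A ≫ y ≫ D.ι B := by
  constructor
  · rintro rfl
    simp only [← Category.assoc, D.ι_inv_hom, Category.id_comp]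
    simp only [Category.assoc, D.ι_inv_hom, Category.comp_id]
  · rintro rfl
    simp only [← Category.assoc, D.ι_hom_inv, Category.id_comp]
    simp only [Category.assoc, D.ι_hom_inv, Category.comp_id]

end Involutive

namespace IPStruct

variable {C : Type u} [Category.{v} C] {D : Involutive C} (S : IPStruct D)
  {A B X : C} (f : A ⟶ X) (g : B ⟶ X)

lemma dual_dmap_dmap_of_IP2c (hc : IP2c S) :
    S.dual (D.dmap f) (D.dmap g) = D.dmap (S.ip g f) := by
  rw [dual, hc, D.dmap_comp, D.dmap_comp, D.dmap_ιinv, D.dmap_ι]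
  simp only [← Category.assoc, D.ι_hom_inv, Category.id_comp]
  simp only [Category.assoc, D.ι_hom_inv, Category.comp_id]

lemma dual_dmap_dmap_of_IP2b (hb : IP2b S) :
    S.dual (D.dmap f) (D.dmap g) =
      S.ip (D.dmap (D.dmap f)) (D.dmap (D.dmap g)) ≫ D.ιinv (D.dob B) := by
  rw [dual, ← Category.assoc, hb]

end IPStruct

section

variable {C : Type u} [Category.{v} C] {D : Involutive C} {S : IPStruct D}

lemma IP2a_iff_IP2b_of_IP2c (hc : IP2c S) : IP2a S ↔ IP2b S := by
  simp only [IP2a, IP2b, S.dual_dmap_dmap_of_IP2c _ _ hc]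
  exact ⟨fun h _ _ _ f g => h g f, fun h _ _ _ f g => h g f⟩

lemma IP2a_iff_IP2c_of_IP2b (hb : IP2b S) : IP2a S ↔ IP2c S := by
  simp only [IP2a, IP2c, S.dual_dmap_dmap_of_IP2b _ _ hb, D.ι_comp_comp_ιinv_eq_iff]

end

theorem ip2_equivalence_general {C : Type u} [Category.{v} C]
    (D : Involutive C) (S : IPStruct D) :
    ((IP2a S ∨ IP2b S) ∧ IP2c S) ↔ (IP2a S ∧ IP2b S) := by
  constructor
  · rintro ⟨hab, hc⟩
    have hab_iff := IP2a_iff_IP2b_of_IP2c hc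
    tauto
  · rintro ⟨ha, hb⟩
    exact ⟨Or.inl ha, (IP2a_iff_IP2c_of_IP2b hb).mp ha⟩

/-- In an involutive category with an inner product combinator satisfying [IP.1],
the following are equivalent: (a) one of [IP.2](a)/[IP.2](b) together with [IP.2](c);
(b) both [IP.2](a) and [IP.2](b). -/
theorem ip2_equivalence {C : Type u} [Category.{v} C]
    (D : Involutive C) (S : IPStruct D)
    (ip1 : ∀ {A B X Y Z : C} (f : A ⟶ X) (g : B ⟶ X) (h : Y ⟶ A) (k : Z ⟶ B),
      S.ip (h ≫ f) (k ≫ g) = h ≫ S.ip f g ≫ D.dmap k) :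
    ((IP2a S ∨ IP2b S) ∧ IP2c S) ↔ (IP2a S ∧ IP2b S) :=
  ip2_equivalence_general D S
end

section
/- For every inner product (unitary) category 𝕏, the adjoint operation f ↦ f* := φ_B f† φ_A^{-1} makes (𝕏, (−)*) a dagger category: (−)* is identity on objects, contravariant, and satisfies f** = f, 1* = 1, (fg)* = g*f*. -/
open CategoryTheory

universe v u

/-! `(−)†` is already a contravariant functor, and in `f*` the inner `φ_B⁻¹ ≫ φ_B` cancels, so
identities and composites are preserved. For involutivity, [U.1] makes `(φ_B)†` the inverse of
`φ_{B†}`, so `f** = φ_A φ_{A†} f†† (φ_B φ_{B†})⁻¹`, which is `ι_A f†† ι_B⁻¹ = f` by [U.2] and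
naturality of `ι`. -/

namespace Involutive

variable {C : Type u} [Category.{v} C] (D : Involutive C)

@[simps]
def ιIso (X : C) : X ≅ D.dob (D.dob X) where
  hom := D.ι X
  inv := D.ιinv X
  hom_inv_id := D.ι_hom_inv X
  inv_hom_id := D.ι_inv_hom X

theorem ι_comp_dmap_dmap_comp_ιinv {X Y : C} (f : X ⟶ Y) :
    D.ι X ≫ D.dmap (D.dmap f) ≫ D.ιinv Y = f := by
  rw [← Category.assoc, ← D.ι_natural, Category.assoc, D.ι_hom_inv, Category.comp_id]

end Involutive

namespace UnitaryStruct

variable {C : Type u} [Category.{v} C] {D : Involutive C} (U : UnitaryStruct D)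

@[simps]
def φIso (X : C) : X ≅ D.dob X where
  hom := U.φ X
  inv := U.φinv X
  hom_inv_id := U.φ_hom_inv X
  inv_hom_id := U.φ_inv_hom X

theorem dmap_φ (X : C) : D.dmap (U.φ X) = U.φinv (D.dob X) := by
  refine Iso.inv_ext' (f := U.φIso (D.dob X)) ?_
  rw [φIso_hom, U.u1, ← D.dmap_comp, U.φ_hom_inv, D.dmap_id]

theorem φinv_dob_comp_φinv (X : C) : U.φinv (D.dob X) ≫ U.φinv X = D.ιinv X :=
  (Iso.inv_eq_inv (U.φIso X ≪≫ U.φIso (D.dob X)) (D.ιIso X)).2 (U.u2 X)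

theorem adj_id (X : C) : U.adj (𝟙 X) = 𝟙 X := by
  rw [adj, D.dmap_id, Category.id_comp, U.φ_hom_inv]

theorem adj_comp {X Y Z : C} (f : X ⟶ Y) (g : Y ⟶ Z) : U.adj (f ≫ g) = U.adj g ≫ U.adj f := by
  simp only [adj, D.dmap_comp, Category.assoc, reassoc_of% U.φ_inv_hom]

theorem adj_adj {X Y : C} (f : X ⟶ Y) : U.adj (U.adj f) = f :=
  calc U.adj (U.adj f)
      = U.φ X ≫ D.dmap (U.φinv X) ≫ D.dmap (D.dmap f) ≫ D.dmap (U.φ Y) ≫ U.φinv Y := by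
        simp only [adj, D.dmap_comp, Category.assoc]
    _ = (U.φ X ≫ U.φ (D.dob X)) ≫ D.dmap (D.dmap f) ≫ U.φinv (D.dob Y) ≫ U.φinv Y := by
        rw [U.u1, U.dmap_φ, Category.assoc]
    _ = f := by
        rw [U.u2, U.φinv_dob_comp_φinv, D.ι_comp_dmap_dmap_comp_ιinv]

end UnitaryStruct

/-- For every inner product (unitary) category, the adjoint operation
`f ↦ f* := φ_B ≫ f† ≫ φ_A⁻¹` makes `(𝕏, (−)*)` a dagger category: `(−)*` is
identity on objects, contravariant, and satisfies `f** = f`, `1* = 1`,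
`(fg)* = g* ≫ f*`. -/
theorem adjoint_gives_dagger_category {C : Type u} [Category.{v} C]
    (D : Involutive C) (U : UnitaryStruct D) :
    (∀ A : C, U.adj (𝟙 A) = 𝟙 A) ∧
    (∀ {A B E : C} (f : A ⟶ B) (g : B ⟶ E), U.adj (f ≫ g) = U.adj g ≫ U.adj f) ∧
    (∀ {A B : C} (f : A ⟶ B), U.adj (U.adj f) = f) :=
  ⟨U.adj_id, U.adj_comp, U.adj_adj⟩
end
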